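/- Let U ⊆ ℝⁿ be open, equipped with the canonical block product for block sizes m_1,…,m_r with unit e (components e^{i(α)} = δ^i_1), and let X be a smooth vector field on U such that at every point of U: X^{1(α)} ≠ X^{1(β)} for all α ≠ β in {1,…,r}, and X^{2(α)} ≠ 0 for every α with m_α ≥ 2. Then there exists a unique torsionless connection Γ on U satisfying ∇e = 0 (equivalently, Σ_{σ=1}^{r} Γ^i_{j 1(σ)} = 0 for all i, j) and d_∇(X∘) = 0. -/

import Mathlib

/-- Index set for block sizes `m 0, …, m (r-1)`. -/
abbrev Idx (r : ℕ) (m : Fin r → ℕ) := Σ α : Fin r, Fin (m α)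

/-- Partial derivative `∂_i f`. -/
noncomputable def pd {r : ℕ} {m : Fin r → ℕ} (i : Idx r m) (f : (Idx r m → ℝ) → ℝ) :
    (Idx r m → ℝ) → ℝ :=
  fun x => fderiv ℝ f x (Pi.single i 1)

/-- Structure constants of the canonical block product. -/
def cblock {r : ℕ} {m : Fin r → ℕ} (i j k : Idx r m) : ℝ :=
  if i.1 = j.1 ∧ i.1 = k.1 ∧ i.2.val = j.2.val + k.2.val then 1 else 0

/-- Components of the unit vector field `e` of the canonical block product:
`e^{i(α)} = δ^i_1`. -/
def eblock {r : ℕ} {m : Fin r → ℕ} (i : Idx r m) : ℝ := if i.2.val = 0 then 1 else 0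

/-- The (1,1)-tensor `X∘` for the canonical block product. -/
noncomputable def Xc {r : ℕ} {m : Fin r → ℕ} (X : Idx r m → (Idx r m → ℝ) → ℝ)
    (i j : Idx r m) : (Idx r m → ℝ) → ℝ :=
  fun x => ∑ s, cblock i j s * X s x

/-- Covariant derivative `∇_j V^i_k` of a (1,1)-tensor `V` with respect to a
connection `Γ`. -/
noncomputable def covT {r : ℕ} {m : Fin r → ℕ}
    (Γ : Idx r m → Idx r m → Idx r m → (Idx r m → ℝ) → ℝ)
    (V : Idx r m → Idx r m → (Idx r m → ℝ) → ℝ) (j i k : Idx r m) :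
    (Idx r m → ℝ) → ℝ :=
  fun x => pd j (V i k) x + (∑ s, Γ i j s x * V s k x) - (∑ s, Γ s j k x * V i s x)

/-- `Γ` is a torsionless connection, smooth on `U`, with flat unit (`∇e = 0`)
and `d_∇(X∘) = 0` on `U`. -/
def GoodConn {r : ℕ} {m : Fin r → ℕ} (U : Set (Idx r m → ℝ))
    (X : Idx r m → (Idx r m → ℝ) → ℝ)
    (Γ : Idx r m → Idx r m → Idx r m → (Idx r m → ℝ) → ℝ) : Prop :=
  (∀ i j k, ContDiffOn ℝ (⊤ : ℕ∞) (Γ i j k) U) ∧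
  (∀ i j k, ∀ x ∈ U, Γ i j k x = Γ i k j x) ∧
  (∀ i j, ∀ x ∈ U, pd j (fun _ => eblock i) x + (∑ s, Γ i j s x * eblock s) = 0) ∧
  (∀ i j k, ∀ x ∈ U, covT Γ (Xc X) j i k x = covT Γ (Xc X) k i j x)

section generic
open Matrix
variable {E : Type*} [NormedAddCommGroup E] [NormedSpace ℝ E] {U : Set E}

lemma cdo_prod {κ : Type*} (s : Finset κ) (f : κ → E → ℝ)
    (h : ∀ i ∈ s, ContDiffOn ℝ (⊤ : ℕ∞) (f i) U) :
    ContDiffOn ℝ (⊤ : ℕ∞) (fun x => ∏ i ∈ s, f i x) U := by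
  classical
  induction s using Finset.induction with
  | empty => simpa using contDiffOn_const
  | insert _ _ hx ih =>
    rename_i a t
    simp only [Finset.prod_insert hx]
    exact (h a (Finset.mem_insert_self a t)).mul
      (ih fun i hi => h i (Finset.mem_insert_of_mem hi))

lemma cdo_det {ι' : Type*} [Fintype ι'] [DecidableEq ι'] (A : E → Matrix ι' ι' ℝ)
    (hA : ∀ p q, ContDiffOn ℝ (⊤ : ℕ∞) (fun x => A x p q) U) :
    ContDiffOn ℝ (⊤ : ℕ∞) (fun x => (A x).det) U := by
  have hrw : (fun x => (A x).det)
      = fun x => ∑ σ : Equiv.Perm ι', ((Equiv.Perm.sign σ : ℤ) : ℝ) * ∏ i, A x (σ i) i :=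
    funext fun x => Matrix.det_apply' _
  rw [hrw]
  exact ContDiffOn.sum fun σ _ =>
    contDiffOn_const.mul (cdo_prod Finset.univ _ fun i _ => hA (σ i) i)

lemma cdo_inv_entry {ι' : Type*} [Fintype ι'] [DecidableEq ι'] (A : E → Matrix ι' ι' ℝ)
    (hA : ∀ p q, ContDiffOn ℝ (⊤ : ℕ∞) (fun x => A x p q) U)
    (hdet : ∀ x ∈ U, (A x).det ≠ 0) (p q : ι') :
    ContDiffOn ℝ (⊤ : ℕ∞) (fun x => (A x)⁻¹ p q) U := by
  have hrw : (fun x => (A x)⁻¹ p q) = fun x => ((A x).det)⁻¹ * (A x).adjugate p q := by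
    funext x
    rw [Matrix.inv_def, Matrix.smul_apply, Ring.inverse_eq_inv', smul_eq_mul]
  rw [hrw]
  refine ((cdo_det A hA).inv hdet).mul ?_
  have hrw2 : (fun x => (A x).adjugate p q)
      = fun x => ((A x).updateRow q (Pi.single p 1)).det :=
    funext fun x => Matrix.adjugate_apply _ _ _
  rw [hrw2]
  apply cdo_det
  intro a b
  simp only [Matrix.updateRow_apply]
  by_cases hab : a = q
  · simp only [if_pos hab]; exact contDiffOn_const
  · simp only [if_neg hab]; exact hA a b

lemma cdo_fderiv_apply {f : E → ℝ} (hU : IsOpen U) (hf : ContDiffOn ℝ (⊤ : ℕ∞) f U)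
    (w : E) : ContDiffOn ℝ (⊤ : ℕ∞) (fun x => fderiv ℝ f x w) U := by
  have h1 : ContDiffOn ℝ (⊤ : ℕ∞) (fderiv ℝ f) U :=
    hf.fderiv_of_isOpen hU (by exact_mod_cast le_top)
  exact h1.clm_apply contDiffOn_const

end generic

section
open Matrix
variable {r : ℕ} {m : Fin r → ℕ}

/-- Lexicographic strict order on `Idx`. -/
def idxLt (j k : Idx r m) : Prop := j.1 < k.1 ∨ (j.1 = k.1 ∧ j.2.val < k.2.val)

instance (j k : Idx r m) : Decidable (idxLt j k) := by unfold idxLt; infer_instance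

lemma idxLt_irrefl (j : Idx r m) : ¬ idxLt j j := by simp [idxLt]

lemma idxLt_asymm {j k : Idx r m} (h : idxLt j k) : ¬ idxLt k j := by
  intro h'
  have e1 : j.1.val < k.1.val ∨ (j.1.val = k.1.val ∧ j.2.val < k.2.val) := by
    rcases h with h | ⟨h1, h2⟩
    · exact Or.inl h
    · exact Or.inr ⟨congrArg Fin.val h1, h2⟩
  have e2 : k.1.val < j.1.val ∨ (k.1.val = j.1.val ∧ k.2.val < j.2.val) := by
    rcases h' with h' | ⟨h1', h2'⟩
    · exact Or.inl h'
    · exact Or.inr ⟨congrArg Fin.val h1', h2'⟩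
  omega

lemma idx_eq {j k : Idx r m} (h1 : j.1 = k.1) (h2 : j.2.val = k.2.val) : j = k := by
  obtain ⟨a, b⟩ := j; obtain ⟨c, d⟩ := k
  simp only at h1; subst h1
  simp_all [Fin.ext_iff]

lemma idx_trichotomy (j k : Idx r m) : idxLt j k ∨ j = k ∨ idxLt k j := by
  rcases lt_trichotomy j.1 k.1 with h | h | h
  · exact Or.inl (Or.inl h)
  · rcases lt_trichotomy j.2.val k.2.val with h2 | h2 | h2
    · exact Or.inl (Or.inr ⟨h, h2⟩)
    · exact Or.inr (Or.inl (idx_eq h h2))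
    · exact Or.inr (Or.inr (Or.inr ⟨h.symm, h2⟩))
  · exact Or.inr (Or.inr (Or.inl h))

/-- The multiplication-by-`v` matrix of the block algebra: `Lm v s k = V^s_k`. -/
def Lm (v : Idx r m → ℝ) : Matrix (Idx r m) (Idx r m) ℝ :=
  fun s k => if h : s.1 = k.1 ∧ k.2.val ≤ s.2.val then
    v ⟨s.1, ⟨s.2.val - k.2.val, lt_of_le_of_lt (Nat.sub_le _ _) s.2.isLt⟩⟩ else 0

lemma Xc_eq (X : Idx r m → (Idx r m → ℝ) → ℝ) (x : Idx r m → ℝ) (s k : Idx r m) :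
    Xc X s k x = Lm (fun t => X t x) s k := by
  unfold Xc Lm
  by_cases h : s.1 = k.1 ∧ k.2.val ≤ s.2.val
  · rw [dif_pos h]
    rw [Finset.sum_eq_single (⟨s.1, ⟨s.2.val - k.2.val, lt_of_le_of_lt (Nat.sub_le _ _) s.2.isLt⟩⟩ : Idx r m)]
    · rw [cblock, if_pos, one_mul]
      exact ⟨h.1, rfl, (Nat.add_sub_cancel' h.2).symm⟩
    · intro t _ ht
      rw [cblock, if_neg, zero_mul]
      rintro ⟨h1, h2, h3⟩
      exact ht (idx_eq h2.symm (show t.2.val = s.2.val - k.2.val by omega))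
    · intro ht; exact absurd (Finset.mem_univ _) ht
  · rw [dif_neg h]
    apply Finset.sum_eq_zero
    intro t _
    rw [cblock, if_neg, zero_mul]
    rintro ⟨h1, h2, h3⟩
    exact h ⟨h1, by omega⟩

/-- The square matrix of the pointwise linear system determining the connection. -/
def bigM (v : Idx r m → ℝ) : Matrix (Idx r m × Idx r m) (Idx r m × Idx r m) ℝ :=
  fun p q =>
    if idxLt p.1 p.2 then
      (if q.1 = p.1 then Lm v q.2 p.2 else 0) - (if q.1 = p.2 then Lm v q.2 p.1 else 0)
    else if idxLt p.2 p.1 then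
      (if q = p then 1 else 0) - (if q = (p.2, p.1) then 1 else 0)
    else (if q.1 = p.1 then eblock q.2 else 0)

lemma mulVec_row_lt (v : Idx r m → ℝ) (g : Idx r m × Idx r m → ℝ) {j k : Idx r m}
    (h : idxLt j k) :
    (bigM v *ᵥ g) (j, k) = (∑ s, Lm v s k * g (j, s)) - ∑ s, Lm v s j * g (k, s) := by
  unfold Matrix.mulVec dotProduct bigM
  simp [if_pos h, sub_mul, ite_mul, Fintype.sum_prod_type, Finset.sum_ite_eq',
    Finset.sum_sub_distrib]

lemma mulVec_row_gt (v : Idx r m → ℝ) (g : Idx r m × Idx r m → ℝ) {j k : Idx r m}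
    (h : idxLt k j) :
    (bigM v *ᵥ g) (j, k) = g (j, k) - g (k, j) := by
  unfold Matrix.mulVec dotProduct bigM
  simp [if_neg (idxLt_asymm h), if_pos h, sub_mul, ite_mul, Finset.sum_ite_eq',
    Finset.sum_sub_distrib]

lemma mulVec_row_diag (v : Idx r m → ℝ) (g : Idx r m × Idx r m → ℝ) (j : Idx r m) :
    (bigM v *ᵥ g) (j, j) = ∑ s, eblock s * g (j, s) := by
  unfold Matrix.mulVec dotProduct bigM
  simp [if_neg (idxLt_irrefl j), ite_mul, Fintype.sum_prod_type, Finset.sum_ite_eq']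


variable {v : Idx r m → ℝ}

lemma Lm_pos {s k : Idx r m} (h1 : s.1 = k.1) (h2 : k.2.val ≤ s.2.val) :
    Lm v s k = v ⟨s.1, ⟨s.2.val - k.2.val, lt_of_le_of_lt (Nat.sub_le _ _) s.2.isLt⟩⟩ :=
  dif_pos ⟨h1, h2⟩

lemma Lm_neg {s k : Idx r m} (h : ¬(s.1 = k.1 ∧ k.2.val ≤ s.2.val)) : Lm v s k = 0 :=
  dif_neg h

lemma Lm_same (s : Idx r m) :
    Lm v s s = v ⟨s.1, ⟨0, lt_of_le_of_lt (Nat.zero_le _) s.2.isLt⟩⟩ := by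
  rw [Lm_pos rfl (le_refl _)]
  exact congrArg v (idx_eq rfl (Nat.sub_self _))

lemma offdiag_zero (hm : ∀ α, 1 ≤ m α)
    (hv1 : ∀ α β : Fin r, α ≠ β → v ⟨α, ⟨0, hm α⟩⟩ ≠ v ⟨β, ⟨0, hm β⟩⟩)
    (h : Matrix (Idx r m) (Idx r m) ℝ)
    (hsym : ∀ j k, h j k = h k j)
    (hL : ∀ j k, (h * Lm v) j k = (h * Lm v) k j) :
    ∀ j k : Idx r m, j.1 ≠ k.1 → h j k = 0 := by
  have claim : ∀ (c : ℕ) (j k : Idx r m), j.1 ≠ k.1 →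
      (m j.1 - 1 - j.2.val) + (m k.1 - 1 - k.2.val) < c → h j k = 0 := by
    intro c
    induction c with
    | zero => intro j k _ hc; omega
    | succ c ih =>
      intro j k hjk hc
      have hrow := hL j k
      rw [Matrix.mul_apply, Matrix.mul_apply] at hrow
      have hzero : ∀ (a b : Idx r m), a.1 ≠ b.1 →
          (m a.1 - 1 - a.2.val) + (m b.1 - 1 - b.2.val) ≤ c → ∀ s : Idx r m, s ≠ b →
          h a s * Lm v s b = 0 := by
        intro a b hab hab2 s hs
        by_cases h1 : s.1 = b.1 ∧ b.2.val ≤ s.2.val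
        · have h2 : b.2.val < s.2.val := by
            rcases Nat.lt_or_ge b.2.val s.2.val with h2 | h2
            · exact h2
            · exact absurd (idx_eq h1.1 (by omega)) hs
          have hms : m s.1 = m b.1 := congrArg m h1.1
          have hlt := s.2.isLt
          have := ih a s (by rw [h1.1]; exact hab) (by omega)
          rw [this, zero_mul]
        · rw [Lm_neg h1, mul_zero]
      have hle : ∑ s, h j s * Lm v s k = h j k * v ⟨k.1, ⟨0, hm k.1⟩⟩ := by
        rw [Finset.sum_eq_single k]
        · rw [Lm_same k]
        · intro s _ hs
          exact hzero j k hjk (by omega) s hs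
        · intro hk; exact absurd (Finset.mem_univ _) hk
      have hri : ∑ s, h k s * Lm v s j = h k j * v ⟨j.1, ⟨0, hm j.1⟩⟩ := by
        rw [Finset.sum_eq_single j]
        · rw [Lm_same j]
        · intro s _ hs
          exact hzero k j (Ne.symm hjk) (by omega) s hs
        · intro hk; exact absurd (Finset.mem_univ _) hk
      rw [hle, hri, hsym k j] at hrow
      have hfac : h j k * (v ⟨k.1, ⟨0, hm k.1⟩⟩ - v ⟨j.1, ⟨0, hm j.1⟩⟩) = 0 := by
        rw [mul_sub, hrow]; ring
      rcases mul_eq_zero.mp hfac with h0 | h0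
      · exact h0
      · exact absurd h0 (sub_ne_zero_of_ne (hv1 k.1 j.1 (Ne.symm hjk)))
  intro j k hjk
  exact claim _ j k hjk (Nat.lt_succ_self _)

lemma col0_zero (hm : ∀ α, 1 ≤ m α)
    (hv1 : ∀ α β : Fin r, α ≠ β → v ⟨α, ⟨0, hm α⟩⟩ ≠ v ⟨β, ⟨0, hm β⟩⟩)
    (h : Matrix (Idx r m) (Idx r m) ℝ)
    (hsym : ∀ j k, h j k = h k j)
    (he : ∀ j, ∑ s, h j s * eblock s = 0)
    (hL : ∀ j k, (h * Lm v) j k = (h * Lm v) k j) :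
    ∀ (j : Idx r m) (α : Fin r), h j ⟨α, ⟨0, hm α⟩⟩ = 0 := by
  have off := offdiag_zero hm hv1 h hsym hL
  intro j α
  by_cases hα : j.1 = α
  · have key := he j
    rw [Finset.sum_eq_single (⟨α, ⟨0, hm α⟩⟩ : Idx r m)] at key
    · simpa [eblock] using key
    · intro s _ hs
      by_cases h0 : s.2.val = 0
      · have hs1 : s.1 ≠ α := fun e => hs (idx_eq e h0)
        rw [off j s (by rw [hα]; exact Ne.symm hs1), zero_mul]
      · simp [eblock, h0]
    · intro hk; exact absurd (Finset.mem_univ _) hk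
  · exact off j _ hα

/-- Iterated `(L - λ)^p` applied to a δ-vector. -/
noncomputable def wvec (v : Idx r m → ℝ) (lam : ℝ) (e0 : Idx r m) : ℕ → Idx r m → ℝ
  | 0 => fun s => if s = e0 then 1 else 0
  | p+1 => fun s => (∑ t, Lm v s t * wvec v lam e0 p t) - lam * wvec v lam e0 p s

/-- `v(α,1)` if defined, else 0. -/
def vone (v : Idx r m → ℝ) (α : Fin r) : ℝ :=
  if hα : 1 < m α then v ⟨α, ⟨1, hα⟩⟩ else 0

section wfacts
variable (hm : ∀ α, 1 ≤ m α) (α : Fin r)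

lemma wvec_offblock : ∀ (p : ℕ) (s : Idx r m), s.1 ≠ α →
    wvec v (v ⟨α, ⟨0, hm α⟩⟩) ⟨α, ⟨0, hm α⟩⟩ p s = 0 := by
  intro p
  induction p with
  | zero =>
    intro s hs
    exact if_neg (fun e => hs (congrArg Sigma.fst e))
  | succ p ih =>
    intro s hs
    show (∑ t, Lm v s t * _) - _ * _ = 0
    rw [ih s hs, mul_zero, sub_zero]
    apply Finset.sum_eq_zero
    intro t _
    by_cases h1 : s.1 = t.1 ∧ t.2.val ≤ s.2.val
    · rw [ih t (by rw [← h1.1]; exact hs), mul_zero]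
    · rw [Lm_neg h1, zero_mul]

lemma wvec_below : ∀ (p : ℕ) (q : Fin (m α)), q.val < p →
    wvec v (v ⟨α, ⟨0, hm α⟩⟩) ⟨α, ⟨0, hm α⟩⟩ p ⟨α, q⟩ = 0 := by
  intro p
  induction p with
  | zero => intro q hq; omega
  | succ p ih =>
    intro q hq
    show (∑ t, Lm v (⟨α, q⟩ : Idx r m) t * _) - _ * _ = 0
    rw [Finset.sum_eq_single (⟨α, q⟩ : Idx r m)]
    · rw [Lm_same]
      show v ⟨α, ⟨0, _⟩⟩ * _ - v ⟨α, ⟨0, hm α⟩⟩ * _ = 0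
      rw [sub_eq_zero]
    · intro t _ ht
      by_cases h1 : (⟨α, q⟩ : Idx r m).1 = t.1 ∧ t.2.val ≤ q.val
      · obtain ⟨β, t2⟩ := t
        have hβ : α = β := h1.1
        subst hβ
        have htq : t2.val < q.val := by
          rcases Nat.lt_or_ge t2.val q.val with h2 | h2
          · exact h2
          · exact absurd (idx_eq rfl (by simp only at h1 ⊢; omega) : (⟨α,t2⟩ : Idx r m) = ⟨α,q⟩).symm
              (fun e => ht e.symm)
        rw [ih t2 (by omega), mul_zero]
      · rw [Lm_neg h1, zero_mul]
    · intro hk; exact absurd (Finset.mem_univ _) hk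

lemma wvec_diag : ∀ (p : ℕ) (hp : p < m α),
    wvec v (v ⟨α, ⟨0, hm α⟩⟩) ⟨α, ⟨0, hm α⟩⟩ p ⟨α, ⟨p, hp⟩⟩ = (vone v α) ^ p := by
  intro p
  induction p with
  | zero =>
    intro hp
    show (if _ = _ then (1:ℝ) else 0) = _
    rw [if_pos (idx_eq rfl rfl), pow_zero]
  | succ p ih =>
    intro hp
    have hp' : p < m α := by omega
    have h1m : 1 < m α := by omega
    set lam := v ⟨α, ⟨0, hm α⟩⟩ with hlam
    set w := wvec v lam ⟨α, ⟨0, hm α⟩⟩ with hw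
    show (∑ t, Lm v (⟨α, ⟨p+1, hp⟩⟩ : Idx r m) t * w p t) - lam * w p ⟨α, ⟨p+1, hp⟩⟩
      = vone v α ^ (p+1)
    have hsub : ∀ t : Idx r m,
        t ∉ ({⟨α, ⟨p, hp'⟩⟩, ⟨α, ⟨p+1, hp⟩⟩} : Finset (Idx r m)) →
        Lm v (⟨α, ⟨p+1, hp⟩⟩ : Idx r m) t * w p t = 0 := by
      intro t ht
      simp only [Finset.mem_insert, Finset.mem_singleton] at ht
      push_neg at ht
      by_cases h1 : (⟨α, ⟨p+1, hp⟩⟩ : Idx r m).1 = t.1 ∧ t.2.val ≤ p+1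
      · obtain ⟨β, t2⟩ := t
        have hβ : α = β := h1.1
        subst hβ
        have ht2 : t2.val < p := by
          have e1 : t2.val ≠ p := fun e => ht.1 (idx_eq rfl e)
          have e2 : t2.val ≠ p+1 := fun e => ht.2 (idx_eq rfl e)
          have := h1.2
          simp only at this
          omega
        rw [hw, wvec_below hm α p t2 ht2, mul_zero]
      · rw [Lm_neg h1, zero_mul]
    rw [← Finset.sum_subset (Finset.subset_univ _) (fun t _ ht => hsub t ht)]
    rw [Finset.sum_pair (by
      intro e
      have := congrArg (fun s : Idx r m => s.2.val) e
      simp only at this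
      omega)]
    have e1 : Lm v (⟨α, ⟨p+1, hp⟩⟩ : Idx r m) ⟨α, ⟨p, hp'⟩⟩ = vone v α := by
      have el := Lm_pos (v := v) (s := (⟨α, ⟨p+1, hp⟩⟩ : Idx r m)) (k := ⟨α, ⟨p, hp'⟩⟩) rfl
        (Nat.le_succ p)
      rw [el, vone, dif_pos h1m]
      exact congrArg v (idx_eq rfl (show p + 1 - p = 1 by omega))
    have e2 : Lm v (⟨α, ⟨p+1, hp⟩⟩ : Idx r m) ⟨α, ⟨p+1, hp⟩⟩ = lam := by
      rw [Lm_same]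
    rw [e1, e2, ih hp']
    ring

end wfacts

section kernel
variable (hm : ∀ α, 1 ≤ m α)
  (hv1 : ∀ α β : Fin r, α ≠ β → v ⟨α, ⟨0, hm α⟩⟩ ≠ v ⟨β, ⟨0, hm β⟩⟩)
  (h : Matrix (Idx r m) (Idx r m) ℝ)
  (hsym : ∀ j k, h j k = h k j)
  (he : ∀ j, ∑ s, h j s * eblock s = 0)
  (hL : ∀ j k, (h * Lm v) j k = (h * Lm v) k j)

include hm hv1 hsym he hL

lemma hw_zero (α : Fin r) :
    ∀ (p : ℕ) (j : Idx r m),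
      ∑ s, h j s * wvec v (v ⟨α, ⟨0, hm α⟩⟩) ⟨α, ⟨0, hm α⟩⟩ p s = 0 := by
  set lam := v ⟨α, ⟨0, hm α⟩⟩ with hlam
  set w := wvec v lam ⟨α, ⟨0, hm α⟩⟩ with hwdef
  intro p
  induction p with
  | zero =>
    intro j
    show ∑ s, h j s * (if s = (⟨α, ⟨0, hm α⟩⟩ : Idx r m) then (1:ℝ) else 0) = 0
    simp only [mul_ite, mul_one, mul_zero]
    rw [Finset.sum_ite_eq' Finset.univ (⟨α, ⟨0, hm α⟩⟩ : Idx r m) (h j)]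
    simp only [Finset.mem_univ, if_true]
    exact col0_zero hm hv1 h hsym he hL j α
  | succ p ih =>
    intro j
    show ∑ s, h j s * ((∑ t, Lm v s t * w p t) - lam * w p s) = 0
    have expand : ∀ s, h j s * ((∑ t, Lm v s t * w p t) - lam * w p s)
        = (∑ t, h j s * Lm v s t * w p t) - lam * (h j s * w p s) := by
      intro s
      rw [mul_sub, Finset.mul_sum]
      congr 1
      · exact Finset.sum_congr rfl (fun t _ => by ring)
      · ring
    rw [Finset.sum_congr rfl (fun s _ => expand s), Finset.sum_sub_distrib,
      ← Finset.mul_sum, ih j, mul_zero, sub_zero, Finset.sum_comm]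
    have c1 : ∀ t : Idx r m, ∑ s, h j s * Lm v s t * w p t = (h * Lm v) j t * w p t :=
      fun t => by rw [Matrix.mul_apply, Finset.sum_mul]
    rw [Finset.sum_congr rfl (fun t _ => c1 t)]
    have c2 : ∀ t : Idx r m, (h * Lm v) j t * w p t = ∑ s, Lm v s j * (h s t * w p t) := by
      intro t
      rw [hL j t, Matrix.mul_apply, Finset.sum_mul]
      exact Finset.sum_congr rfl (fun s _ => by rw [hsym t s]; ring)
    rw [Finset.sum_congr rfl (fun t _ => c2 t), Finset.sum_comm]
    apply Finset.sum_eq_zero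
    intro s _
    rw [← Finset.mul_sum, ih s, mul_zero]

lemma kernel_triv (hv2 : ∀ α : Fin r, ∀ hα : 1 < m α, v ⟨α, ⟨1, hα⟩⟩ ≠ 0) :
    ∀ j k : Idx r m, h j k = 0 := by
  have final : ∀ (d : ℕ) (α : Fin r) (k : Fin (m α)) (j : Idx r m), m α - k.val ≤ d →
      h j ⟨α, k⟩ = 0 := by
    intro d
    induction d with
    | zero => intro α k j hd; have := k.isLt; omega
    | succ d ih =>
      intro α k j hd
      have key := hw_zero hm hv1 h hsym he hL α k.val j
      rw [Finset.sum_eq_single (⟨α, k⟩ : Idx r m)] at key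
      · have hdg : wvec v (v ⟨α, ⟨0, hm α⟩⟩) ⟨α, ⟨0, hm α⟩⟩ k.val ⟨α, k⟩
            = vone v α ^ k.val := wvec_diag hm α k.val k.isLt
        rw [hdg] at key
        rcases mul_eq_zero.mp key with h0 | h0
        · exact h0
        · exfalso
          rcases Nat.eq_zero_or_pos k.val with hk0 | hk0
          · rw [hk0, pow_zero] at h0; exact one_ne_zero h0
          · have h1m : 1 < m α := by have := k.isLt; omega
            have : vone v α ≠ 0 := by rw [vone, dif_pos h1m]; exact hv2 α h1m
            exact pow_ne_zero k.val this h0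
      · intro s _ hs
        by_cases hs1 : s.1 = α
        · obtain ⟨β, q⟩ := s
          have hβ : β = α := hs1
          subst hβ
          rcases Nat.lt_trichotomy q.val k.val with hq | hq | hq
          · rw [wvec_below hm β k.val q hq, mul_zero]
          · exact absurd (idx_eq (j := (⟨β, q⟩ : Idx r m)) (k := ⟨β, k⟩) rfl hq) hs
          · have hql := q.isLt
            rw [ih β q j (by omega), zero_mul]
        · rw [wvec_offblock hm α k.val s hs1, mul_zero]
      · intro hk; exact absurd (Finset.mem_univ _) hk
  intro j k
  obtain ⟨α, k2⟩ := k
  exact final (m α) α k2 j (Nat.sub_le _ _)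

end kernel

lemma bigM_det_ne (hm : ∀ α, 1 ≤ m α)
    (hv1 : ∀ α β : Fin r, α ≠ β → v ⟨α, ⟨0, hm α⟩⟩ ≠ v ⟨β, ⟨0, hm β⟩⟩)
    (hv2 : ∀ α : Fin r, ∀ hα : 1 < m α, v ⟨α, ⟨1, hα⟩⟩ ≠ 0) :
    (bigM v).det ≠ 0 := by
  intro hdet
  obtain ⟨g, hg0, hgz⟩ := (Matrix.exists_mulVec_eq_zero_iff).mpr hdet
  apply hg0
  funext p
  set h : Matrix (Idx r m) (Idx r m) ℝ := fun j k => g (j, k) with hh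
  have hrow0 : ∀ q : Idx r m × Idx r m, (bigM v *ᵥ g) q = 0 := fun q => by
    rw [hgz]; rfl
  have hsym : ∀ j k, h j k = h k j := by
    intro j k
    rcases idx_trichotomy j k with hjk | rfl | hjk
    · have := hrow0 (k, j); rw [mulVec_row_gt v g hjk] at this
      exact (sub_eq_zero.mp this).symm
    · rfl
    · have := hrow0 (j, k); rw [mulVec_row_gt v g hjk] at this
      exact sub_eq_zero.mp this
  have he : ∀ j, ∑ s, h j s * eblock s = 0 := by
    intro j
    have := hrow0 (j, j); rw [mulVec_row_diag v g j] at this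
    rw [← this]
    exact Finset.sum_congr rfl fun s _ => mul_comm _ _
  have hLmul : ∀ j k, (h * Lm v) j k = ∑ s, Lm v s k * g (j, s) := by
    intro j k
    rw [Matrix.mul_apply]
    exact Finset.sum_congr rfl fun s _ => mul_comm _ _
  have hL : ∀ j k, (h * Lm v) j k = (h * Lm v) k j := by
    intro j k
    rcases idx_trichotomy j k with hjk | rfl | hjk
    · have := hrow0 (j, k); rw [mulVec_row_lt v g hjk] at this
      rw [hLmul j k, hLmul k j]
      linarith [this]
    · rfl
    · have := hrow0 (k, j); rw [mulVec_row_lt v g hjk] at this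
      rw [hLmul j k, hLmul k j]
      linarith [this]
  have := kernel_triv hm hv1 h hsym he hL hv2 p.1 p.2
  exact this

/-- Right-hand side of the linear system. -/
noncomputable def Rfun (X : Idx r m → (Idx r m → ℝ) → ℝ) (i : Idx r m) (x : Idx r m → ℝ) :
    Idx r m × Idx r m → ℝ :=
  fun p => if idxLt p.1 p.2 then pd p.2 (Xc X i p.1) x - pd p.1 (Xc X i p.2) x else 0

/-- The connection. -/
noncomputable def Gam (X : Idx r m → (Idx r m → ℝ) → ℝ) (i j k : Idx r m)
    (x : Idx r m → ℝ) : ℝ :=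
  ((bigM (fun t => X t x))⁻¹ *ᵥ Rfun X i x) (j, k)

lemma pd_const (c : ℝ) (j : Idx r m) (x : Idx r m → ℝ) : pd j (fun _ => c) x = 0 := by
  unfold pd
  rw [fderiv_fun_const]
  simp

lemma cov_iff_row (X Γ : _) (x : Idx r m → ℝ)
    (htor : ∀ i' j' k' : Idx r m, Γ i' j' k' x = Γ i' k' j' x) (i j k : Idx r m) :
    (covT Γ (Xc X) j i k x = covT Γ (Xc X) k i j x) ↔
    ((∑ s, Lm (fun t => X t x) s k * Γ i j s x) - (∑ s, Lm (fun t => X t x) s j * Γ i k s x)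
      = pd k (Xc X i j) x - pd j (Xc X i k) x) := by
  unfold covT
  have h3 : ∑ s, Γ s j k x * Xc X i s x = ∑ s, Γ s k j x * Xc X i s x :=
    Finset.sum_congr rfl fun s _ => by rw [htor s j k]
  have h4 : ∑ s, Γ i j s x * Xc X s k x = ∑ s, Lm (fun t => X t x) s k * Γ i j s x :=
    Finset.sum_congr rfl fun s _ => by rw [Xc_eq]; ring
  have h5 : ∑ s, Γ i k s x * Xc X s j x = ∑ s, Lm (fun t => X t x) s j * Γ i k s x :=
    Finset.sum_congr rfl fun s _ => by rw [Xc_eq]; ring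
  rw [h3, h4, h5]
  constructor <;> intro hh <;> linarith

section smoothness
variable {U : Set (Idx r m → ℝ)} (X : Idx r m → (Idx r m → ℝ) → ℝ)
  (hX : ∀ i, ContDiffOn ℝ (⊤ : ℕ∞) (X i) U)

include hX

lemma Lm_entry_smooth (s k : Idx r m) :
    ContDiffOn ℝ (⊤ : ℕ∞) (fun x => Lm (fun t => X t x) s k) U := by
  unfold Lm
  by_cases h : s.1 = k.1 ∧ k.2.val ≤ s.2.val
  · simp only [dif_pos h]; exact hX _
  · simp only [dif_neg h]; exact contDiffOn_const

lemma bigM_entry_smooth (p q : Idx r m × Idx r m) :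
    ContDiffOn ℝ (⊤ : ℕ∞) (fun x => bigM (fun t => X t x) p q) U := by
  unfold bigM
  by_cases h1 : idxLt p.1 p.2
  · simp only [if_pos h1]
    apply ContDiffOn.sub
    · by_cases h2 : q.1 = p.1
      · simp only [if_pos h2]; exact Lm_entry_smooth X hX _ _
      · simp only [if_neg h2]; exact contDiffOn_const
    · by_cases h2 : q.1 = p.2
      · simp only [if_pos h2]; exact Lm_entry_smooth X hX _ _
      · simp only [if_neg h2]; exact contDiffOn_const
  · simp only [if_neg h1]
    by_cases h2 : idxLt p.2 p.1
    · simp only [if_pos h2]; exact contDiffOn_const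
    · simp only [if_neg h2]; exact contDiffOn_const

lemma Xc_smooth (i k : Idx r m) : ContDiffOn ℝ (⊤ : ℕ∞) (Xc X i k) U := by
  unfold Xc
  exact ContDiffOn.sum fun s _ => contDiffOn_const.mul (hX s)

lemma Rfun_entry_smooth (hU : IsOpen U) (i : Idx r m) (p : Idx r m × Idx r m) :
    ContDiffOn ℝ (⊤ : ℕ∞) (fun x => Rfun X i x p) U := by
  unfold Rfun
  by_cases h1 : idxLt p.1 p.2
  · simp only [if_pos h1]
    unfold pd
    exact (cdo_fderiv_apply hU (Xc_smooth X hX i p.1) _).sub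
      (cdo_fderiv_apply hU (Xc_smooth X hX i p.2) _)
  · simp only [if_neg h1]; exact contDiffOn_const

lemma Gam_smooth (hU : IsOpen U)
    (hdet : ∀ x ∈ U, (bigM (fun t => X t x)).det ≠ 0) (i j k : Idx r m) :
    ContDiffOn ℝ (⊤ : ℕ∞) (Gam X i j k) U := by
  have hrw : Gam X i j k = fun x =>
      ∑ q, (bigM (fun t => X t x))⁻¹ (j, k) q * Rfun X i x q := by
    funext x; rfl
  rw [hrw]
  exact ContDiffOn.sum fun q _ =>
    (cdo_inv_entry _ (bigM_entry_smooth X hX) hdet _ _).mul (Rfun_entry_smooth X hX hU i q)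

end smoothness

end

open Matrix in
/-- Existence and uniqueness of the torsionless connection with `∇e = 0` and
`d_∇(X∘) = 0` for a vector field `X` with `X^{1(α)} ≠ X^{1(β)}` (`α ≠ β`) and
`X^{2(α)} ≠ 0` at every point. -/
theorem stmt6 {r : ℕ} {m : Fin r → ℕ} (hm : ∀ α, 1 ≤ m α)
    (U : Set (Idx r m → ℝ)) (hU : IsOpen U)
    (X : Idx r m → (Idx r m → ℝ) → ℝ)
    (hX : ∀ i, ContDiffOn ℝ (⊤ : ℕ∞) (X i) U)
    (hX1 : ∀ x ∈ U, ∀ α β : Fin r, α ≠ β →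
      X ⟨α, ⟨0, hm α⟩⟩ x ≠ X ⟨β, ⟨0, hm β⟩⟩ x)
    (hX2 : ∀ x ∈ U, ∀ α : Fin r, ∀ hα : 1 < m α, X ⟨α, ⟨1, hα⟩⟩ x ≠ 0) :
    ∃ Γ : Idx r m → Idx r m → Idx r m → (Idx r m → ℝ) → ℝ,
      GoodConn U X Γ ∧
      ∀ Γ' : Idx r m → Idx r m → Idx r m → (Idx r m → ℝ) → ℝ,
        GoodConn U X Γ' → ∀ i j k, ∀ x ∈ U, Γ' i j k x = Γ i j k x := by

  classical
  have hdet : ∀ x ∈ U, (bigM (fun t => X t x)).det ≠ 0 := fun x hx =>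
    bigM_det_ne (v := fun t => X t x) hm (hX1 x hx) (hX2 x hx)
  have hMg : ∀ (i : Idx r m) (x : Idx r m → ℝ), x ∈ U →
      bigM (fun t => X t x) *ᵥ (fun p => Gam X i p.1 p.2 x) = Rfun X i x := by
    intro i x hx
    have h1 : (fun p : Idx r m × Idx r m => Gam X i p.1 p.2 x)
        = (bigM (fun t => X t x))⁻¹ *ᵥ Rfun X i x := by
      funext p; rfl
    rw [h1, Matrix.mulVec_mulVec,
      Matrix.mul_nonsing_inv _ (isUnit_iff_ne_zero.mpr (hdet x hx)), Matrix.one_mulVec]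
  have htor : ∀ i j k, ∀ x ∈ U, Gam X i j k x = Gam X i k j x := by
    intro i j k x hx
    rcases idx_trichotomy j k with hjk | rfl | hjk
    · have h2 := congrFun (hMg i x hx) (k, j)
      rw [mulVec_row_gt _ _ hjk] at h2
      rw [show Rfun X i x (k, j) = 0 from by
        simp only [Rfun]; exact if_neg (idxLt_asymm hjk)] at h2
      exact (sub_eq_zero.mp h2).symm
    · rfl
    · have h2 := congrFun (hMg i x hx) (j, k)
      rw [mulVec_row_gt _ _ hjk] at h2
      rw [show Rfun X i x (j, k) = 0 from by
        simp only [Rfun]; exact if_neg (idxLt_asymm hjk)] at h2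
      exact sub_eq_zero.mp h2
  refine ⟨Gam X, ⟨fun i j k => Gam_smooth X hX hU hdet i j k, htor, ?_, ?_⟩, ?_⟩
  · -- flat unit
    intro i j x hx
    have h2 := congrFun (hMg i x hx) (j, j)
    rw [mulVec_row_diag] at h2
    rw [show Rfun X i x (j, j) = 0 from by
      simp only [Rfun]; exact if_neg (idxLt_irrefl j)] at h2
    rw [pd_const]
    have h3 : ∑ s, Gam X i j s x * eblock s = ∑ s, eblock s * Gam X i j s x :=
      Finset.sum_congr rfl fun s _ => mul_comm _ _
    rw [h3]
    rw [show (∑ s, eblock s * Gam X i j s x) = 0 from h2]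
    ring
  · -- d_∇ (X ∘) = 0
    have hlt : ∀ i j k, idxLt j k → ∀ x ∈ U,
        covT (Gam X) (Xc X) j i k x = covT (Gam X) (Xc X) k i j x := by
      intro i j k hjk x hx
      have htorx : ∀ i' j' k', Gam X i' j' k' x = Gam X i' k' j' x :=
        fun i' j' k' => htor i' j' k' x hx
      refine (cov_iff_row X (Gam X) x htorx i j k).mpr ?_
      have h2 := congrFun (hMg i x hx) (j, k)
      rw [mulVec_row_lt _ _ hjk] at h2
      rw [show Rfun X i x (j, k) = pd k (Xc X i j) x - pd j (Xc X i k) x from by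
        simp only [Rfun]; exact if_pos hjk] at h2
      exact h2
    intro i j k x hx
    rcases idx_trichotomy j k with hjk | rfl | hjk
    · exact hlt i j k hjk x hx
    · rfl
    · exact (hlt i k j hjk x hx).symm
  · -- uniqueness
    intro Γ' hG' i j k x hx
    obtain ⟨hs', ht', he', hc'⟩ := hG'
    have htorx : ∀ i' j' k', Γ' i' j' k' x = Γ' i' k' j' x :=
      fun i' j' k' => ht' i' j' k' x hx
    have hrows : ∀ i', bigM (fun t => X t x) *ᵥ (fun p => Γ' i' p.1 p.2 x)
        = Rfun X i' x := by
      intro i'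
      funext p
      obtain ⟨a, b⟩ := p
      rcases idx_trichotomy a b with hab | rfl | hab
      · rw [mulVec_row_lt _ _ hab]
        rw [show Rfun X i' x (a, b) = pd b (Xc X i' a) x - pd a (Xc X i' b) x from by
          simp only [Rfun]; exact if_pos hab]
        exact (cov_iff_row X Γ' x htorx i' a b).mp (hc' i' a b x hx)
      · rw [mulVec_row_diag]
        rw [show Rfun X i' x (a, a) = 0 from by
          simp only [Rfun]; exact if_neg (idxLt_irrefl a)]
        have h4 := he' i' a x hx
        rw [pd_const] at h4
        have h3 : ∑ s, eblock s * Γ' i' a s x = ∑ s, Γ' i' a s x * eblock s :=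
          Finset.sum_congr rfl fun s _ => mul_comm _ _
        rw [h3]; linarith
      · rw [mulVec_row_gt _ _ hab]
        rw [show Rfun X i' x (a, b) = 0 from by
          simp only [Rfun]; exact if_neg (idxLt_asymm hab)]
        rw [show Γ' i' a b x = Γ' i' b a x from htorx i' a b]
        exact sub_self _
    have hfin : (fun p : Idx r m × Idx r m => Γ' i p.1 p.2 x)
        = fun p : Idx r m × Idx r m => Gam X i p.1 p.2 x := by
      have h1 : (fun p : Idx r m × Idx r m => Γ' i p.1 p.2 x)
          = (bigM (fun t => X t x))⁻¹ *ᵥ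
            (bigM (fun t => X t x) *ᵥ (fun p => Γ' i p.1 p.2 x)) := by
        rw [Matrix.mulVec_mulVec,
          Matrix.nonsing_inv_mul _ (isUnit_iff_ne_zero.mpr (hdet x hx)),
          Matrix.one_mulVec]
      rw [h1, hrows i]
      funext p; rfl
    exact congrFun hfin (j, k)
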